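/- Let k be an infinite field and S = k[x_1, ..., x_n]. If J ⊆ I are complete intersection ideals of S of the same height r, with types a = (a_1, ..., a_r) and b = (b_1, ..., b_r) respectively, then b ≤ a componentwise. -/

import Mathlib

/- Common definitions: `S = k[x_1, …, x_n]` is modelled as `MvPolynomial (Fin n) k`,
graded by total degree. -/

noncomputable section

variable {k : Type*} [Field k] {n : ℕ}

/-- The Hilbert function of `S/I`: `H(S/I, d) = dim_k (S/I)_d`, realized as the
`k`-dimension of the image of the degree-`d` homogeneous component of `S` in `S/I`. -/
def hilb (I : Ideal (MvPolynomial (Fin n) k)) (d : ℕ) : ℕ :=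
  Module.finrank k
    ((MvPolynomial.homogeneousSubmodule (Fin n) k d).map
      (Submodule.mkQ (Submodule.restrictScalars k I)))

/-- A homogeneous ideal: an ideal containing all homogeneous components of its elements. -/
def IsHomogeneousIdeal (I : Ideal (MvPolynomial (Fin n) k)) : Prop :=
  ∀ f ∈ I, ∀ d : ℕ, MvPolynomial.homogeneousComponent d f ∈ I

/-- A monomial ideal: an ideal generated by monomials. -/
def IsMonomialIdeal (J : Ideal (MvPolynomial (Fin n) k)) : Prop :=
  ∃ A : Set (Fin n →₀ ℕ),
    J = Ideal.span ((fun a => (MvPolynomial.monomial a (1 : k))) '' A)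

/-- The height of an ideal: the infimum of the heights of the primes containing it. -/
def idealHeight {R : Type*} [CommRing R] (I : Ideal R) : ℕ∞ :=
  ⨅ (p : PrimeSpectrum R) (_ : I ≤ p.asIdeal), Order.height p

/-- `I` contains an `S`-regular sequence of forms of degrees `d 0, …, d (r-1)`. -/
def ContainsRegSeqOfDegrees (I : Ideal (MvPolynomial (Fin n) k)) {r : ℕ}
    (d : Fin r → ℕ) : Prop :=
  ∃ f : Fin r → MvPolynomial (Fin n) k,
    (∀ i, f i ∈ I) ∧ (∀ i, (f i).IsHomogeneous (d i)) ∧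
      RingTheory.Sequence.IsRegular (MvPolynomial (Fin n) k) (List.ofFn f)

/-- `I` minimally contains an `(a 0, …, a (r-1))`-regular sequence of forms:
`I` has depth `r` (it contains a regular sequence of `r` forms but none of `r + 1` forms),
the minimum degree of the forms in `I` is `a 0`, and for each `i ≥ 1` the integer `a i` is
the smallest degree `d` such that `I` contains a regular sequence of forms of degrees
`a 0, …, a (i-1), d`. -/
def MinimallyContains (I : Ideal (MvPolynomial (Fin n) k)) {r : ℕ}
    (a : Fin r → ℕ) : Prop :=
  ContainsRegSeqOfDegrees I a ∧
  (¬ ∃ d : Fin (r + 1) → ℕ, ContainsRegSeqOfDegrees I d) ∧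
  (∀ hr : 0 < r, ∀ f ∈ I, f ≠ 0 → ∀ d : ℕ, f.IsHomogeneous d → a ⟨0, hr⟩ ≤ d) ∧
  (∀ i : Fin r, 0 < (i : ℕ) → ∀ d : ℕ, d < a i →
    ¬ ContainsRegSeqOfDegrees I
        (fun j : Fin ((i : ℕ) + 1) =>
          if h : (j : ℕ) < (i : ℕ) then a ⟨(j : ℕ), h.trans i.isLt⟩ else d))

/-- `J` is a complete intersection ideal of type `a` (with `a` non-decreasing):
`J` is generated by a regular sequence of forms of degrees `a 0 ≤ … ≤ a (r-1)`. -/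
def IsCIofType (J : Ideal (MvPolynomial (Fin n) k)) {r : ℕ} (a : Fin r → ℕ) : Prop :=
  Monotone a ∧
    ∃ f : Fin r → MvPolynomial (Fin n) k,
      (∀ i, (f i).IsHomogeneous (a i)) ∧
        RingTheory.Sequence.IsRegular (MvPolynomial (Fin n) k) (List.ofFn f) ∧
        J = Ideal.span (Set.range f)

/-- `J` is a complete intersection ideal. -/
def IsCI (J : Ideal (MvPolynomial (Fin n) k)) : Prop :=
  ∃ (r : ℕ) (a : Fin r → ℕ), IsCIofType J a

/-- `I` and `I'`, of height `r`, are directly linked by the complete intersection ideal `J`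
of height `r`: `J ⊆ I ∩ I'`, `I = J : I'` and `I' = J : I`. -/
def DirectlyLinked (r : ℕ) (I I' J : Ideal (MvPolynomial (Fin n) k)) : Prop :=
  idealHeight I = (r : ℕ∞) ∧ idealHeight I' = (r : ℕ∞) ∧ idealHeight J = (r : ℕ∞) ∧
    IsCI J ∧ J ≤ I ⊓ I' ∧ I = Submodule.colon J I' ∧ I' = Submodule.colon J I


open Polynomial in
/-- Weak regularity of a finite sequence, phrased via ideal quotients. -/
def SeqWR {R : Type*} [CommRing R] {m : ℕ} (x : Fin m → R) : Prop :=
  ∀ (j : Fin m) (u : R), x j * u ∈ Ideal.span (x '' {l | l < j}) →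
    u ∈ Ideal.span (x '' {l | l < j})

lemma ideal_smul_top {R : Type*} [CommRing R] (I : Ideal R) :
    (I • (⊤ : Submodule R R)) = I := by
  rw [smul_eq_mul, Ideal.mul_top]

lemma ofList_ofFn {R : Type*} [CommRing R] {m : ℕ} (f : Fin m → R) :
    Ideal.ofList (List.ofFn f) = Ideal.span (Set.range f) := by
  unfold Ideal.ofList
  congr 1
  ext y
  simp [List.mem_ofFn, Set.mem_range, eq_comm]

/-- McCoy-type step: a "generic" linear combination is regular. -/
lemma mccoy_step {A : Type*} [CommRing A] {s : ℕ} (a : Fin s → A) (d : A)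
    (hd : d ∈ Ideal.span (Set.range a)) (hreg : ∀ u : A, d * u = 0 → u = 0)
    (u : Polynomial A) (hu : (∑ l : Fin s, Polynomial.monomial (l : ℕ) (a l)) * u = 0) :
    u = 0 := by
  by_contra hne
  set G : Polynomial A := ∑ l : Fin s, Polynomial.monomial (l : ℕ) (a l) with hG
  have hGnmem : G ∉ nonZeroDivisors (Polynomial A) := by
    intro hmem
    exact hne (hmem.2 u (by rw [mul_comm]; exact hu))
  obtain ⟨c, hc0, hcG⟩ := Polynomial.notMem_nonZeroDivisors_iff.mp hGnmem
  have hkill : ∀ l : Fin s, c * a l = 0 := by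
    intro l
    have := congrArg (fun p => Polynomial.coeff p (l : ℕ)) hcG
    simp only [Polynomial.coeff_smul, Polynomial.coeff_zero, smul_eq_mul] at this
    rw [hG] at this
    rw [Polynomial.finset_sum_coeff] at this
    rw [Finset.sum_eq_single l (fun b _ hbl => by
      rw [Polynomial.coeff_monomial, if_neg (fun h => hbl (Fin.ext h))]) (by simp)] at this
    simpa [Polynomial.coeff_monomial] using this
  obtain ⟨co, hco⟩ := Ideal.mem_span_range_iff_exists_fun.mp hd
  have : d * c = 0 := by
    rw [← hco, Finset.sum_mul]
    refine Finset.sum_eq_zero fun l _ => ?_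
    calc co l * a l * c = co l * (c * a l) := by ring
    _ = 0 := by rw [hkill l, mul_zero]
  exact hc0 (hreg c this)


/-- Localization step: kill the generic relation and drop one generator. -/
lemma descend {B : Type u} [CommRing B] {s : ℕ} (τ : B) (g' : Fin (s + 1) → B)
    (y : Fin (s + 1) → B) (hSWR : SeqWR y)
    (hyI : ∀ j, y j ∈ Ideal.span (Set.range g'))
    (hrel : ∑ l : Fin (s + 1), g' l * τ ^ (l : ℕ) = 0)
    (hproper' : ∀ N : ℕ, τ ^ N ∉ Ideal.span (Set.range g')) :
    ∃ (gst : Fin s → Localization.Away τ) (z : Fin (s + 1) → Localization.Away τ),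
      Ideal.span (Set.range gst) ≠ ⊤ ∧ (∀ j, z j ∈ Ideal.span (Set.range gst)) ∧ SeqWR z := by
  classical
  let ψ : B →+* Localization.Away τ := algebraMap B (Localization.Away τ)
  have hτu : ∀ N : ℕ, IsUnit (ψ (τ ^ N)) := by
    intro N
    rw [map_pow]
    exact (IsLocalization.map_units (M := Submonoid.powers τ) (Localization.Away τ)
      ⟨τ, Submonoid.mem_powers τ⟩).pow N
  have hsurj : ∀ u : Localization.Away τ, ∃ (U : B) (N : ℕ), ψ U = u * ψ (τ ^ N) := by
    intro u
    obtain ⟨⟨U, m⟩, h⟩ := IsLocalization.surj (M := Submonoid.powers τ) u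
    obtain ⟨N, hN⟩ := m.2
    have hN' : τ ^ N = (m : B) := hN
    exact ⟨U, N, by rw [hN']; exact h.symm⟩
  have hker : ∀ a : B, ψ a = 0 → ∃ N : ℕ, τ ^ N * a = 0 := by
    intro a ha
    obtain ⟨m, hm⟩ := (IsLocalization.map_eq_zero_iff (Submonoid.powers τ)
      (Localization.Away τ) a).mp ha
    obtain ⟨N, hN⟩ := m.2
    have hN' : τ ^ N = (m : B) := hN
    exact ⟨N, by rw [hN']; exact hm⟩
  have hmm : ∀ (Q : Ideal B) (a : B), ψ a ∈ Q.map ψ → ∃ N : ℕ, τ ^ N * a ∈ Q := by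
    intro Q a h
    rw [IsLocalization.mem_map_algebraMap_iff (Submonoid.powers τ) (Localization.Away τ)] at h
    obtain ⟨⟨⟨q, hq⟩, m⟩, hmq⟩ := h
    obtain ⟨N, hN⟩ := m.2
    have hN' : τ ^ N = (m : B) := hN
    have hz : ψ (a * τ ^ N - q) = 0 := by
      rw [map_sub, map_mul, hN', sub_eq_zero]
      exact hmq
    obtain ⟨N', hN2⟩ := hker _ hz
    refine ⟨N' + N, ?_⟩
    have e : τ ^ (N' + N) * a = τ ^ N' * q := by linear_combination hN2
    rw [e]
    exact Ideal.mul_mem_left _ _ hq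
  refine ⟨fun l => ψ (g' l.castSucc), fun l => ψ (y l), ?_, ?_, ?_⟩
  · -- properness
    intro htop
    have hle : Ideal.span (Set.range fun l : Fin s => ψ (g' l.castSucc))
        ≤ (Ideal.span (Set.range g')).map ψ := by
      rw [Ideal.span_le]
      rintro _ ⟨l, rfl⟩
      exact Ideal.mem_map_of_mem ψ (Ideal.subset_span ⟨l.castSucc, rfl⟩)
    have h1 : (1 : Localization.Away τ) ∈ (Ideal.span (Set.range g')).map ψ :=
      hle (htop ▸ Submodule.mem_top)
    obtain ⟨N, hN⟩ := hmm _ 1 (by rwa [map_one])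
    rw [mul_one] at hN
    exact hproper' N hN
  · -- membership
    have hrange : ∀ l : Fin (s + 1),
        ψ (g' l) ∈ Ideal.span (Set.range fun l : Fin s => ψ (g' l.castSucc)) := by
      have hsum : ∑ l : Fin (s + 1), ψ (g' l) * (ψ τ) ^ (l : ℕ) = 0 := by
        calc ∑ l : Fin (s + 1), ψ (g' l) * (ψ τ) ^ (l : ℕ)
            = ψ (∑ l : Fin (s + 1), g' l * τ ^ (l : ℕ)) := by
              rw [map_sum]
              exact Finset.sum_congr rfl fun l _ => by rw [map_mul, map_pow]
          _ = 0 := by rw [hrel, map_zero]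
      rw [Fin.sum_univ_castSucc] at hsum
      have hsum_mem : ∑ l : Fin s, ψ (g' l.castSucc) * (ψ τ) ^ (l : ℕ) ∈
          Ideal.span (Set.range fun l : Fin s => ψ (g' l.castSucc)) :=
        sum_mem fun l _ => Ideal.mul_mem_right _ _ (Ideal.subset_span ⟨l, rfl⟩)
      obtain ⟨w, hw⟩ := (hτu s).exists_left_inv
      have hw' : w * (ψ τ) ^ s = 1 := by rw [← map_pow]; exact hw
      have hglast : ψ (g' (Fin.last s)) ∈
          Ideal.span (Set.range fun l : Fin s => ψ (g' l.castSucc)) := by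
        have e1 : ψ (g' (Fin.last s)) * (ψ τ) ^ s
            = - ∑ l : Fin s, ψ (g' l.castSucc) * (ψ τ) ^ (l : ℕ) := by
          rw [eq_neg_iff_add_eq_zero, add_comm]
          simpa using hsum
        have e2 : ψ (g' (Fin.last s))
            = w * (- ∑ l : Fin s, ψ (g' l.castSucc) * (ψ τ) ^ (l : ℕ)) := by
          rw [← e1]
          calc ψ (g' (Fin.last s)) = (w * (ψ τ) ^ s) * ψ (g' (Fin.last s)) := by
                rw [hw', one_mul]
            _ = w * (ψ (g' (Fin.last s)) * (ψ τ) ^ s) := by ring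
        rw [e2]
        exact Ideal.mul_mem_left _ _ (neg_mem hsum_mem)
      intro l
      refine Fin.lastCases ?_ ?_ l
      · exact hglast
      · intro l'
        exact Ideal.subset_span ⟨l', rfl⟩
    intro j
    have hmem := Ideal.mem_map_of_mem ψ (hyI j)
    rw [Ideal.map_span, ← Set.range_comp] at hmem
    have hle : Ideal.span (Set.range (ψ ∘ g'))
        ≤ Ideal.span (Set.range fun l : Fin s => ψ (g' l.castSucc)) := by
      rw [Ideal.span_le]
      rintro _ ⟨l, rfl⟩
      exact hrange l
    exact hle hmem
  · -- weak regularity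
    intro j u hu
    have hPz : ∀ t : ℕ, Ideal.span ((fun l : Fin (s + 1) => ψ (y l)) '' {l | (l : ℕ) < t})
        = (Ideal.span (y '' {l : Fin (s + 1) | (l : ℕ) < t})).map ψ := by
      intro t
      rw [Ideal.map_span, ← Set.image_comp]
      rfl
    have hu' : ψ (y j) * u ∈ (Ideal.span (y '' {l : Fin (s + 1) | (l : ℕ) < (j : ℕ)})).map ψ := by
      rw [← hPz]
      exact hu
    obtain ⟨U, N, hU⟩ := hsurj u
    have h1 : ψ (y j * U) ∈ (Ideal.span (y '' {l : Fin (s + 1) | (l : ℕ) < (j : ℕ)})).map ψ := by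
      have e : ψ (y j * U) = (ψ (y j) * u) * ψ (τ ^ N) := by
        rw [map_mul, hU]
        ring
      rw [e]
      exact Ideal.mul_mem_right _ _ hu'
    obtain ⟨K, hK⟩ := hmm _ _ h1
    have h2 : y j * (τ ^ K * U) ∈ Ideal.span (y '' {l : Fin (s + 1) | (l : ℕ) < (j : ℕ)}) := by
      have e : y j * (τ ^ K * U) = τ ^ K * (y j * U) := by ring
      rw [e]
      exact hK
    have h3 : τ ^ K * U ∈ Ideal.span (y '' {l : Fin (s + 1) | (l : ℕ) < (j : ℕ)}) := hSWR j _ h2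
    have h4 := Ideal.mem_map_of_mem ψ h3
    have h5 : ψ (τ ^ (K + N)) * u ∈
        (Ideal.span (y '' {l : Fin (s + 1) | (l : ℕ) < (j : ℕ)})).map ψ := by
      have e : ψ (τ ^ K * U) = ψ (τ ^ (K + N)) * u := by
        rw [map_mul, hU, pow_add, map_mul]
        ring
      rw [← e]
      exact h4
    obtain ⟨w, hw⟩ := (hτu (K + N)).exists_left_inv
    have hu2 : u = w * (ψ (τ ^ (K + N)) * u) := by rw [← mul_assoc, hw, one_mul]
    show u ∈ Ideal.span ((fun l : Fin (s + 1) => ψ (y l)) '' {l | (l : ℕ) < (j : ℕ)})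
    rw [hPz, hu2]
    exact Ideal.mul_mem_left _ _ h5

set_option synthInstance.maxHeartbeats 1000000 in
set_option maxHeartbeats 1600000 in
open Polynomial in
theorem keyG : ∀ (s : ℕ) (R : Type u) [CommRing R] (g : Fin s → R) (x : Fin (s + 1) → R),
    Ideal.span (Set.range g) ≠ ⊤ → (∀ j, x j ∈ Ideal.span (Set.range g)) → SeqWR x → False := by
  intro s
  induction s with
  | zero =>
    intro R _ g x hproper hxI hWR
    have hx0 : x 0 = 0 := by
      have := hxI 0
      rwa [Set.range_eq_empty, Ideal.span_empty, Ideal.mem_bot] at this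
    have hset : (x '' {l : Fin 1 | l < 0}) = ∅ := by
      apply Set.image_eq_empty.mpr
      ext l
      simp
    have h1 : (1 : R) ∈ Ideal.span (x '' {l : Fin 1 | l < 0}) := by
      apply hWR 0 1
      rw [hx0, zero_mul]
      exact zero_mem _
    rw [hset, Ideal.span_empty, Ideal.mem_bot] at h1
    apply hproper
    rw [Ideal.eq_top_iff_one, h1]
    exact zero_mem _
  | succ s ih =>
    intro R _ g x hproper hxI hWR
    classical
    -- ℕ-indexed prefix ideals
    set Jn : ℕ → Ideal R := fun t => Ideal.span (x '' {l : Fin (s + 2) | (l : ℕ) < t}) with hJn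
    have hWRn : ∀ (t : ℕ) (ht : t < s + 2) (u : R), x ⟨t, ht⟩ * u ∈ Jn t → u ∈ Jn t := by
      intro t ht u hu
      exact hWR ⟨t, ht⟩ u hu
    have hJmono : ∀ {t t' : ℕ}, t ≤ t' → Jn t ≤ Jn t' := by
      intro t t' h
      exact Ideal.span_mono (Set.image_mono fun l hl => lt_of_lt_of_le hl h)
    have hJsucc : ∀ (t : ℕ) (ht : t < s + 2), Jn (t + 1) = Ideal.span {x ⟨t, ht⟩} ⊔ Jn t := by
      intro t ht
      have hins : (x '' {l : Fin (s + 2) | (l : ℕ) < t + 1}) =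
          insert (x ⟨t, ht⟩) (x '' {l : Fin (s + 2) | (l : ℕ) < t}) := by
        ext y
        constructor
        · rintro ⟨l, hl, rfl⟩
          rcases Nat.lt_succ_iff_lt_or_eq.mp hl with h | h
          · exact Set.mem_insert_iff.mpr (Or.inr ⟨l, h, rfl⟩)
          · exact Set.mem_insert_iff.mpr (Or.inl (by congr 1; exact Fin.ext h))
        · intro hy
          rcases Set.mem_insert_iff.mp hy with rfl | ⟨l, hl, rfl⟩
          · exact ⟨⟨t, ht⟩, Nat.lt_succ_self t, rfl⟩
          · exact ⟨l, Nat.lt_succ_of_lt hl, rfl⟩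
      rw [hJn]
      simp only
      rw [hins, Ideal.span_insert]
    -- the generic element
    set G : Polynomial R := ∑ l : Fin (s + 1), Polynomial.monomial (l : ℕ) (g l) with hGdef
    have hGmap : ∀ (K : Ideal R), Polynomial.map (Ideal.Quotient.mk K) G
        = ∑ l : Fin (s + 1), Polynomial.monomial (l : ℕ) (Ideal.Quotient.mk K (g l)) := by
      intro K
      rw [hGdef, Polynomial.map_sum]
      simp [Polynomial.map_monomial]
    have hMmem : ∀ (t : ℕ) (p : Polynomial R),
        p ∈ (Jn t).map (Polynomial.C (R := R)) ↔ Polynomial.map (Ideal.Quotient.mk (Jn t)) p = 0 := by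
      intro t p
      rw [Ideal.mem_map_C_iff, Polynomial.ext_iff]
      constructor
      · intro h m
        simp only [Polynomial.coeff_map, Polynomial.coeff_zero,
          Ideal.Quotient.eq_zero_iff_mem]
        exact h m
      · intro h m
        have := h m
        simpa only [Polynomial.coeff_map, Polynomial.coeff_zero,
          Ideal.Quotient.eq_zero_iff_mem] using this
    -- McCoy levels
    have hA : ∀ (t : ℕ), t ≤ s + 1 → ∀ (u : Polynomial R),
        G * u ∈ (Jn t).map (Polynomial.C (R := R)) → u ∈ (Jn t).map (Polynomial.C (R := R)) := by
      intro t ht u hu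
      have ht2 : t < s + 2 := by omega
      rw [hMmem] at hu ⊢
      rw [Polynomial.map_mul] at hu
      refine mccoy_step (fun l => Ideal.Quotient.mk (Jn t) (g l))
        (Ideal.Quotient.mk (Jn t) (x ⟨t, ht2⟩)) ?_ ?_ _ ?_
      · have := Ideal.mem_map_of_mem (Ideal.Quotient.mk (Jn t)) (hxI ⟨t, ht2⟩)
        rwa [Ideal.map_span, ← Set.range_comp] at this
      · intro v hv
        obtain ⟨w, rfl⟩ := Ideal.Quotient.mk_surjective v
        rw [← map_mul, Ideal.Quotient.eq_zero_iff_mem] at hv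
        rw [Ideal.Quotient.eq_zero_iff_mem]
        exact hWRn t ht2 w hv
      · rw [← hGmap]
        exact hu
    have hB : ∀ (t : ℕ) (ht2 : t < s + 2), t ≤ s → ∀ (u : Polynomial R),
        Polynomial.C (x ⟨t, ht2⟩) * u ∈ Ideal.span {G} ⊔ (Jn t).map (Polynomial.C (R := R)) →
        u ∈ Ideal.span {G} ⊔ (Jn t).map (Polynomial.C (R := R)) := by
      intro t ht2 ht u hu
      obtain ⟨y, hy, w, hw, hyw⟩ := Submodule.mem_sup.mp hu
      obtain ⟨v, rfl⟩ := Ideal.mem_span_singleton'.mp hy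
      have h1 : G * v ∈ (Jn (t + 1)).map (Polynomial.C (R := R)) := by
        have hxmem : Polynomial.C (x ⟨t, ht2⟩) * u ∈ (Jn (t + 1)).map (Polynomial.C (R := R)) :=
          Ideal.mul_mem_right u _ (Ideal.mem_map_of_mem _
            (Ideal.subset_span ⟨⟨t, ht2⟩, Nat.lt_succ_self t, rfl⟩))
        have heq : G * v = Polynomial.C (x ⟨t, ht2⟩) * u - w := by
          rw [mul_comm]
          exact eq_sub_of_add_eq hyw
        rw [heq]
        exact sub_mem hxmem (Ideal.map_mono (hJmono (Nat.le_succ t)) hw)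
      have h2 := hA (t + 1) (by omega) v h1
      rw [hJsucc t ht2, Ideal.map_sup] at h2
      obtain ⟨p, hp, q, hq, hpq⟩ := Submodule.mem_sup.mp h2
      rw [Ideal.map_span, Set.image_singleton] at hp
      obtain ⟨v', hv'⟩ := Ideal.mem_span_singleton'.mp hp
      have h3 : Polynomial.C (x ⟨t, ht2⟩) * (u - G * v') ∈ (Jn t).map (Polynomial.C (R := R)) := by
        have e2 : v = v' * Polynomial.C (x ⟨t, ht2⟩) + q := by
          rw [← hv'] at hpq
          exact hpq.symm
        have expand : Polynomial.C (x ⟨t, ht2⟩) * (u - G * v') = G * q + w := by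
          have e1 : Polynomial.C (x ⟨t, ht2⟩) * u = v * G + w := hyw.symm
          calc Polynomial.C (x ⟨t, ht2⟩) * (u - G * v')
              = Polynomial.C (x ⟨t, ht2⟩) * u - Polynomial.C (x ⟨t, ht2⟩) * (G * v') := by ring
            _ = v * G + w - Polynomial.C (x ⟨t, ht2⟩) * (G * v') := by rw [e1]
            _ = (v' * Polynomial.C (x ⟨t, ht2⟩) + q) * G + w
                - Polynomial.C (x ⟨t, ht2⟩) * (G * v') := by rw [← e2]
            _ = G * q + w := by ring
        rw [expand]
        exact add_mem (Ideal.mul_mem_left _ _ hq) hw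
      have h4 : u - G * v' ∈ (Jn t).map (Polynomial.C (R := R)) := by
        rw [Ideal.mem_map_C_iff] at h3 ⊢
        intro m
        have := h3 m
        rw [Polynomial.coeff_C_mul] at this
        exact hWRn t ht2 _ this
      have hdecomp : u = G * v' + (u - G * v') := by ring
      rw [hdecomp]
      exact Submodule.add_mem_sup (Ideal.mem_span_singleton'.mpr ⟨v', mul_comm v' G⟩) h4
    -- quotient by the generic element
    let mkG : Polynomial R →+* Polynomial R ⧸ Ideal.span {G} := Ideal.Quotient.mk (Ideal.span {G})
    set x'' : Fin (s + 1) → Polynomial R ⧸ Ideal.span {G} :=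
      fun l => mkG (Polynomial.C (x l.castSucc)) with hx''
    set P : ℕ → Ideal (Polynomial R ⧸ Ideal.span {G}) :=
      fun t => Ideal.span (x'' '' {l : Fin (s + 1) | (l : ℕ) < t}) with hP
    have hPmap : ∀ (t : ℕ), t ≤ s + 1 → P t = Ideal.map mkG ((Jn t).map (Polynomial.C (R := R))) := by
      intro t ht
      rw [hP]
      simp only
      rw [Ideal.map_span, Ideal.map_span]
      congr 1
      ext y
      constructor
      · rintro ⟨l, hl, rfl⟩
        exact ⟨Polynomial.C (x l.castSucc), ⟨x l.castSucc,
          ⟨l.castSucc, by simpa using hl, rfl⟩, rfl⟩, rfl⟩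
      · rintro ⟨_, ⟨_, ⟨l, hl, rfl⟩, rfl⟩, rfl⟩
        have hls : (l : ℕ) < s + 1 := lt_of_lt_of_le hl ht
        refine ⟨⟨(l : ℕ), hls⟩, hl, ?_⟩
        rw [hx'']
        congr 2
    have hWRq : ∀ (t : ℕ) (ht1 : t < s + 1) (u : Polynomial R ⧸ Ideal.span {G}),
        x'' ⟨t, ht1⟩ * u ∈ P t → u ∈ P t := by
      intro t ht1 u hu
      obtain ⟨U, rfl⟩ := Ideal.Quotient.mk_surjective u
      have ht2 : t < s + 2 := by omega
      rw [hPmap t (by omega)] at hu ⊢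
      have hlift : Polynomial.C (x ⟨t, ht2⟩) * U ∈
          Ideal.span {G} ⊔ (Jn t).map (Polynomial.C (R := R)) := by
        have hx'val : x'' ⟨t, ht1⟩ * mkG U = mkG (Polynomial.C (x ⟨t, ht2⟩) * U) := by
          rw [hx'']
          simp only
          rw [← map_mul]
          congr 3
        rw [hx'val] at hu
        obtain ⟨W, hW, hWeq⟩ := (Ideal.mem_map_iff_of_surjective mkG
          Ideal.Quotient.mk_surjective).mp hu
        have hdiff : Polynomial.C (x ⟨t, ht2⟩) * U - W ∈ Ideal.span {G} :=
          Ideal.Quotient.eq.mp hWeq.symm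
        have : Polynomial.C (x ⟨t, ht2⟩) * U = (Polynomial.C (x ⟨t, ht2⟩) * U - W) + W := by ring
        rw [this]
        exact add_mem (Submodule.mem_sup_left hdiff) (Submodule.mem_sup_right hW)
      have hres := hB t ht2 (by omega) U hlift
      have hbot : Ideal.map mkG (Ideal.span {G}) = ⊥ := by
        rw [Ideal.map_span, Set.image_singleton]
        have : mkG G = 0 := Ideal.Quotient.eq_zero_iff_mem.mpr (Ideal.subset_span rfl)
        rw [this]
        exact Ideal.span_singleton_eq_bot.mpr rfl
      have := Ideal.mem_map_of_mem mkG hres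
      rwa [Ideal.map_sup, hbot, bot_sup_eq] at this
    -- pass to the localization via the `descend` lemma
    have hSWR : SeqWR x'' := by
      intro j u hu
      exact hWRq (j : ℕ) j.isLt u hu
    set g' : Fin (s + 1) → Polynomial R ⧸ Ideal.span {G} :=
      fun l => mkG (Polynomial.C (g l)) with hg'
    have hyI : ∀ j : Fin (s + 1), x'' j ∈ Ideal.span (Set.range g') := by
      intro j
      have hmem := Ideal.mem_map_of_mem (mkG.comp (Polynomial.C (R := R) : R →+* Polynomial R))
        (hxI j.castSucc)
      rwa [Ideal.map_span, ← Set.range_comp] at hmem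
    have hrel : ∑ l : Fin (s + 1), g' l * (mkG Polynomial.X) ^ (l : ℕ) = 0 := by
      calc ∑ l : Fin (s + 1), g' l * (mkG Polynomial.X) ^ (l : ℕ)
          = ∑ l : Fin (s + 1), mkG (Polynomial.monomial (l : ℕ) (g l)) := by
            refine Finset.sum_congr rfl fun l _ => ?_
            rw [hg']
            rw [← Polynomial.C_mul_X_pow_eq_monomial, map_mul, map_pow]
        _ = mkG G := by rw [← map_sum, ← hGdef]
        _ = 0 := Ideal.Quotient.eq_zero_iff_mem.mpr (Ideal.subset_span rfl)
    have hproper'' : ∀ N : ℕ, (mkG Polynomial.X) ^ N ∉ Ideal.span (Set.range g') := by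
      intro N hN
      have hsp : Ideal.span (Set.range g')
          = Ideal.map mkG ((Ideal.span (Set.range g)).map (Polynomial.C (R := R))) := by
        rw [Ideal.map_span, Ideal.map_span, ← Set.range_comp, ← Set.range_comp]
        rfl
      rw [hsp] at hN
      have e : (mkG Polynomial.X) ^ N = mkG (Polynomial.X ^ N) := by rw [map_pow]
      rw [e] at hN
      obtain ⟨W, hW, hWeq⟩ := (Ideal.mem_map_iff_of_surjective mkG
        Ideal.Quotient.mk_surjective).mp hN
      have hdiff : Polynomial.X ^ N - W ∈ Ideal.span {G} := Ideal.Quotient.eq.mp hWeq.symm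
      have hGQ1 : G ∈ (Ideal.span (Set.range g)).map (Polynomial.C (R := R)) := by
        rw [hGdef]
        refine sum_mem fun l _ => ?_
        rw [← Polynomial.C_mul_X_pow_eq_monomial]
        exact Ideal.mul_mem_right _ _ (Ideal.mem_map_of_mem _ (Ideal.subset_span ⟨l, rfl⟩))
      have hGle : Ideal.span {G} ≤ (Ideal.span (Set.range g)).map (Polynomial.C (R := R)) :=
        Ideal.span_le.mpr (Set.singleton_subset_iff.mpr hGQ1)
      have h3 : (Polynomial.X : Polynomial R) ^ N
          ∈ (Ideal.span (Set.range g)).map (Polynomial.C (R := R)) := by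
        have e2 : (Polynomial.X : Polynomial R) ^ N = W + (Polynomial.X ^ N - W) := by ring
        rw [e2]
        exact add_mem hW (hGle hdiff)
      have h4 := Ideal.mem_map_C_iff.mp h3 N
      rw [Polynomial.coeff_X_pow, if_pos rfl] at h4
      exact hproper ((Ideal.eq_top_iff_one _).mpr h4)
    obtain ⟨gst, z, hp1, hp2, hp3⟩ := descend (mkG Polynomial.X) g' x'' hSWR hyI hrel hproper''
    exact ih _ gst z hp1 hp2 hp3

/-- A prefix of a weakly regular sequence (mathlib's notion) is `SeqWR`. -/
lemma seqWR_of_isWeaklyRegular {R : Type*} [CommRing R] {m : ℕ} (f : Fin m → R)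
    (h : RingTheory.Sequence.IsWeaklyRegular R (List.ofFn f)) : SeqWR f := by
  intro j u hu
  have hlen : (List.ofFn f).length = m := List.length_ofFn
  have hj : (j : ℕ) < (List.ofFn f).length := by rw [hlen]; exact j.isLt
  have hreg := h.regular_mod_prev (j : ℕ) hj
  have hgetElem : (List.ofFn f)[(j : ℕ)] = f j := by
    simp [List.getElem_ofFn]
  rw [hgetElem] at hreg
  have hideal : Ideal.ofList ((List.ofFn f).take (j : ℕ)) = Ideal.span (f '' {l | l < j}) := by
    rw [← Fin.ofFn_take_eq_take_ofFn j.isLt.le f]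
    rw [ofList_ofFn]
    congr 1
    ext y
    constructor
    · rintro ⟨l, rfl⟩
      exact ⟨Fin.castLE j.isLt.le l, l.isLt, rfl⟩
    · rintro ⟨l, hl, rfl⟩
      exact ⟨⟨(l : ℕ), hl⟩, rfl⟩
  set I := Ideal.span (f '' {l | l < j}) with hI
  rw [hideal] at hreg
  -- hreg : IsSMulRegular (R ⧸ I • ⊤) (f j)
  have hsm : (I • (⊤ : Submodule R R)) = I := ideal_smul_top I
  have h1 : Submodule.Quotient.mk (p := I • (⊤ : Submodule R R)) u = 0 := by
    have h0 : Submodule.Quotient.mk (p := I • (⊤ : Submodule R R)) (f j * u) = 0 := by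
      rw [Submodule.Quotient.mk_eq_zero, hsm]
      exact hu
    have h2 : f j • Submodule.Quotient.mk (p := I • (⊤ : Submodule R R)) u
        = f j • (0 : R ⧸ I • (⊤ : Submodule R R)) := by
      rw [smul_zero, ← Submodule.Quotient.mk_smul, smul_eq_mul]
      exact h0
    exact hreg h2
  rw [Submodule.Quotient.mk_eq_zero, hsm] at h1
  exact h1

/-- Restriction of `SeqWR` to a prefix. -/
lemma seqWR_castLE {R : Type*} [CommRing R] {m m' : ℕ} (hmm' : m' ≤ m) (f : Fin m → R)
    (h : SeqWR f) : SeqWR (fun l : Fin m' => f (Fin.castLE hmm' l)) := by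
  intro j u hu
  have hset : ((fun l : Fin m' => f (Fin.castLE hmm' l)) '' {l | l < j})
      = f '' {l : Fin m | l < Fin.castLE hmm' j} := by
    ext y
    constructor
    · rintro ⟨l, hl, rfl⟩
      exact ⟨Fin.castLE hmm' l, hl, rfl⟩
    · rintro ⟨l, hl, rfl⟩
      have hlm : (l : ℕ) < m' := lt_of_lt_of_le hl (by exact_mod_cast Nat.le_of_lt_succ (Nat.lt_succ_of_lt j.isLt))
      exact ⟨⟨(l : ℕ), lt_trans hl j.isLt⟩, hl, rfl⟩
  rw [hset] at hu ⊢
  exact h (Fin.castLE hmm' j) u hu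

lemma span_ne_top_of_isRegular {R : Type*} [CommRing R] {m : ℕ} (f : Fin m → R)
    (h : RingTheory.Sequence.IsRegular R (List.ofFn f)) : Ideal.span (Set.range f) ≠ ⊤ := by
  intro htop
  apply h.top_ne_smul
  rw [ofList_ofFn, htop, ideal_smul_top]

lemma homog_mem_span_lowdeg {k : Type*} [CommRing k] {σ : Type*} {r : ℕ}
    (g : Fin r → MvPolynomial σ k) (b : Fin r → ℕ) (hg : ∀ l, (g l).IsHomogeneous (b l))
    (f : MvPolynomial σ k) (D : ℕ) (hf : f.IsHomogeneous D)
    (hmem : f ∈ Ideal.span (Set.range g)) :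
    f ∈ Ideal.span (g '' {l | b l ≤ D}) := by
  obtain ⟨c, hc⟩ := Ideal.mem_span_range_iff_exists_fun.mp hmem
  have hfD : MvPolynomial.homogeneousComponent D f = f := by
    rw [MvPolynomial.homogeneousComponent_of_mem
      ((MvPolynomial.mem_homogeneousSubmodule _ _).mpr hf), if_pos rfl]
  rw [← hfD, ← hc, map_sum]
  refine sum_mem fun l _ => ?_
  have hexp : c l * g l = ∑ e ∈ Finset.range ((c l).totalDegree + 1),
      MvPolynomial.homogeneousComponent e (c l) * g l := by
    rw [← Finset.sum_mul, MvPolynomial.sum_homogeneousComponent]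
  rw [hexp, map_sum]
  refine sum_mem fun e _ => ?_
  have hhom : MvPolynomial.homogeneousComponent e (c l) * g l ∈
      MvPolynomial.homogeneousSubmodule σ k (e + b l) :=
    (MvPolynomial.mem_homogeneousSubmodule _ _).mpr
      ((MvPolynomial.homogeneousComponent_isHomogeneous e (c l)).mul (hg l))
  rw [MvPolynomial.homogeneousComponent_of_mem hhom]
  split_ifs with hD
  · exact Ideal.mul_mem_left _ _ (Ideal.subset_span ⟨l, show b l ≤ D by omega, rfl⟩)
  · exact zero_mem _


/-- If `J ⊆ I` are complete intersection ideals of the same height `r`, of types `a` and `b`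
respectively, then `b ≤ a` componentwise. -/
theorem nested_ci_types_decrease {k : Type*} [Field k] [Infinite k] {n r : ℕ}
    (I J : Ideal (MvPolynomial (Fin n) k)) (a b : Fin r → ℕ)
    (hJtype : IsCIofType J a) (hItype : IsCIofType I b)
    (hJI : J ≤ I)
    (hJheight : idealHeight J = (r : ℕ∞)) (hIheight : idealHeight I = (r : ℕ∞)) :
    ∀ i : Fin r, b i ≤ a i := by
  intro i
  by_contra hlt
  push_neg at hlt
  obtain ⟨hamono, f, hfdeg, hfreg, hJdef⟩ := hJtype
  obtain ⟨hbmono, g, hgdeg, hgreg, hIdef⟩ := hItype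
  have hi1 : (i : ℕ) + 1 ≤ r := i.isLt
  apply keyG (i : ℕ) (MvPolynomial (Fin n) k)
    (fun l : Fin (i : ℕ) => g (Fin.castLE i.isLt.le l))
    (fun j : Fin ((i : ℕ) + 1) => f (Fin.castLE hi1 j)) ?_ ?_ ?_
  · -- the smaller ideal is proper
    intro htop
    have hIne : Ideal.span (Set.range g) ≠ ⊤ := span_ne_top_of_isRegular g hgreg
    apply hIne
    rw [Ideal.eq_top_iff_one]
    have h1 : (1 : MvPolynomial (Fin n) k)
        ∈ Ideal.span (Set.range fun l : Fin (i : ℕ) => g (Fin.castLE i.isLt.le l)) :=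
      htop ▸ Submodule.mem_top
    have hle : Ideal.span (Set.range fun l : Fin (i : ℕ) => g (Fin.castLE i.isLt.le l))
        ≤ Ideal.span (Set.range g) := by
      rw [Ideal.span_le]
      rintro _ ⟨l, rfl⟩
      exact Ideal.subset_span ⟨_, rfl⟩
    exact hle h1
  · -- all the f's of index ≤ i lie in the ideal generated by the g's of index < i
    intro j
    have hfJ : f (Fin.castLE hi1 j) ∈ J := by
      rw [hJdef]
      exact Ideal.subset_span ⟨_, rfl⟩
    have hfI : f (Fin.castLE hi1 j) ∈ Ideal.span (Set.range g) := by
      rw [← hIdef]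
      exact hJI hfJ
    have hlow := homog_mem_span_lowdeg g b hgdeg (f (Fin.castLE hi1 j))
      (a (Fin.castLE hi1 j)) (hfdeg (Fin.castLE hi1 j)) hfI
    have hle : Ideal.span (g '' {l | b l ≤ a (Fin.castLE hi1 j)})
        ≤ Ideal.span (Set.range fun l : Fin (i : ℕ) => g (Fin.castLE i.isLt.le l)) := by
      rw [Ideal.span_le]
      rintro _ ⟨l, hl, rfl⟩
      have hl' : b l ≤ a (Fin.castLE hi1 j) := hl
      have haj : a (Fin.castLE hi1 j) ≤ a i := by
        apply hamono
        rw [Fin.le_def]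
        exact Nat.lt_succ_iff.mp j.isLt
      have hlx : (l : ℕ) < (i : ℕ) := by
        by_contra hge
        have hbi : b i ≤ b l := by
          apply hbmono
          rw [Fin.le_def]
          omega
        omega
      refine Ideal.subset_span ⟨⟨(l : ℕ), hlx⟩, ?_⟩
      show g (Fin.castLE i.isLt.le ⟨(l : ℕ), hlx⟩) = g l
      congr 1
    exact hle hlow
  · -- the f's of index ≤ i form a weakly regular sequence
    exact seqWR_castLE hi1 f (seqWR_of_isWeaklyRegular f hfreg.toIsWeaklyRegular)
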